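/- Let γ : [0,T] → ℝ³ be absolutely continuous with γ' ∈ L²([0,T];ℝ³), let ω ∈ L²([0,T];ℝ³), and let v : [0,T] → ℝ³ be absolutely continuous with v(0) = 0. Then v(s) = ∫₀^s ω(σ) × (γ(s) − γ(σ)) dσ holds for all s ∈ [0,T] if and only if v'(s) = ( ∫₀^s ω(σ) dσ ) × γ'(s) for a.e. s ∈ [0,T]. -/

import Mathlib

open MeasureTheory Set Classical
noncomputable section

/-- Three-dimensional Euclidean space. -/
abbrev E3 : Type := EuclideanSpace ℝ (Fin 3)

/-- The cross product on `ℝ³`. -/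
def cross (u v : E3) : E3 :=
  WithLp.toLp 2 ![u 1 * v 2 - u 2 * v 1, u 2 * v 0 - u 0 * v 2, u 0 * v 1 - u 1 * v 0]

/-- The Euclidean inner product on `ℝ³`. -/
def rinner (u v : E3) : ℝ := inner ℝ u v

/-- The signed distance to the boundary of `Ω`: negative inside `Ω`, positive outside. -/
def signedDistBdry (Ω : Set E3) (x : E3) : ℝ :=
  if x ∈ Ω then -(Metric.infDist x (frontier Ω)) else Metric.infDist x (frontier Ω)

/-- The (unit) outer normal to `Ω`, i.e. the gradient of the signed distance. -/
def outerNormal (Ω : Set E3) (x : E3) : E3 := gradient (signedDistBdry Ω) x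

/-- The set `Ω` has boundary of class `C^k`: near every boundary point, `Ω` is the sublevel
set of a `C^k` defining function with nonvanishing gradient. -/
def HasCkBoundary (Ω : Set E3) (k : ℕ∞) : Prop :=
  ∀ x ∈ frontier Ω, ∃ (U : Set E3) (f : E3 → ℝ), IsOpen U ∧ x ∈ U ∧
    ContDiffOn ℝ k f U ∧ (∀ y ∈ U, gradient f y ≠ 0) ∧
    Ω ∩ U = {y ∈ U | f y < 0} ∧ frontier Ω ∩ U = {y ∈ U | f y = 0}

/-- `γ`, together with its derivative `γd` and second derivative `γdd`, is a curve of Sobolev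
class `H²` on `[0,T]`: `γ` and `γd` are absolutely continuous with the stated derivatives,
and `γdd` is square integrable. -/
def IsH2Curve (T : ℝ) (γ γd γdd : ℝ → E3) : Prop :=
  (∀ s ∈ Icc (0:ℝ) T, γ s = γ 0 + ∫ σ in (0:ℝ)..s, γd σ) ∧
  (∀ s ∈ Icc (0:ℝ) T, γd s = γd 0 + ∫ σ in (0:ℝ)..s, γdd σ) ∧
  MemLp γdd 2 (volume.restrict (Icc (0:ℝ) T))

/-- The `L²` norm of `ω` on `[0,T]`. -/
def L2norm (T : ℝ) (ω : ℝ → E3) : ℝ := Real.sqrt (∫ s in (0:ℝ)..T, ‖ω s‖ ^ 2)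

/-- The `H²` norm of a curve on `[0,T]` (given together with its two derivatives). -/
def H2norm (T : ℝ) (v vd vdd : ℝ → E3) : ℝ :=
  Real.sqrt ((∫ s in (0:ℝ)..T, ‖v s‖ ^ 2) + (∫ s in (0:ℝ)..T, ‖vd s‖ ^ 2) +
    (∫ s in (0:ℝ)..T, ‖vdd s‖ ^ 2))

/-- Membership in the tube `V_ρ` around the (extended) initial curve `γ₀`:
`γ(0) = 0`, `γ'(0) = γ₀'(0)`, `|γ'| ≡ 1` on `[0,T]`, and `∫₀^T |γ'' − γ₀''|² ≤ ρ`. -/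
def InTube (T ρ : ℝ) (γ₀d0 : E3) (γ₀dd : ℝ → E3) (γ γd γdd : ℝ → E3) : Prop :=
  IsH2Curve T γ γd γdd ∧ γ 0 = 0 ∧ γd 0 = γ₀d0 ∧
  (∀ s ∈ Icc (0:ℝ) T, ‖γd s‖ = 1) ∧
  (∫ s in (0:ℝ)..T, ‖γdd s - γ₀dd s‖ ^ 2) ≤ ρ

/-- The second derivative of the curve `γ₀` extended linearly beyond `t₀`. -/
def extendSecond (t₀ : ℝ) (γ₀dd : ℝ → E3) : ℝ → E3 :=
  fun s => if s ≤ t₀ then γ₀dd s else 0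

/-- The rotated curve `γ_ω(s) = γ(s) + ∫₀^s ω(σ) × (γ(s) − γ(σ)) dσ`. -/
def rotCurve (γ ω : ℝ → E3) (s : ℝ) : E3 :=
  γ s + ∫ σ in (0:ℝ)..s, cross (ω σ) (γ s - γ σ)

/-- The elastic cost `J(ω) = ∫₀^T e^{β(t−s)} |ω(s)|² ds`. -/
def Jcost (β t T : ℝ) (ω : ℝ → E3) : ℝ :=
  ∫ s in (0:ℝ)..T, Real.exp (β * (t - s)) * ‖ω s‖ ^ 2

/-- The maximal depth `E(t,γ,Ω)` at which `γ|_{[0,t]}` penetrates inside `Ω` (zero if it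
does not enter `Ω`). -/
def penDepth (t : ℝ) (γ : ℝ → E3) (Ω : Set E3) : ℝ :=
  sSup (insert 0 {d | ∃ s ∈ Icc (0:ℝ) t, γ s ∈ Ω ∧ d = Metric.infDist (γ s) (frontier Ω)})

/-- The breakdown configuration (B): the tip touches the obstacle perpendicularly, and the
curve is straight (a.e.) wherever it does not touch the boundary. -/
def Breakdown (Ω : Set E3) (t₀ : ℝ) (γ γd γdd : ℝ → E3) : Prop :=
  γ t₀ ∈ frontier Ω ∧ γd t₀ = - outerNormal Ω (γ t₀) ∧
  (∀ᵐ s : ℝ, s ∈ Ioo (0:ℝ) t₀ → γ s ∉ frontier Ω → γdd s = 0)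

/-- The linear map `v ↦ w × v`. -/
def crossLM (w : E3) : E3 →ₗ[ℝ] E3 where
  toFun v := cross w v
  map_add' a b := by
    ext i
    fin_cases i <;> simp [cross, PiLp.add_apply] <;> ring
  map_smul' c a := by
    ext i
    fin_cases i <;> simp [cross, PiLp.smul_apply, smul_eq_mul] <;> ring

/-- The continuous linear map `A(w) : v ↦ w × v`. -/
def crossCLM (w : E3) : E3 →L[ℝ] E3 := LinearMap.toContinuousLinearMap (crossLM w)

/-- The rotation `R[w] = exp(A(w))`, where `A(w)v = w × v`. -/
def rotOf (w : E3) : E3 →L[ℝ] E3 := NormedSpace.exp (crossCLM w)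

/-!
Write `W(τ) = ∫₀^τ ω`. Since `γ(s) − γ(σ) = ∫_σ^s γ'`, the rotation integral is the integral of
`ω(σ) × γ'(τ)` over the triangle `0 < σ < τ < s`; integrating in `σ` first (Fubini) turns it into
`∫₀^s W(τ) × γ'(τ) dτ`, i.e. the integration by parts `∫₀^s ω × (γ(s) − γ) = ∫₀^s W × γ'`.
So `v` is the rotation integral iff `v = ∫₀^· W × γ'` on `[0,T]`; as both are primitives, this
holds iff their derivatives agree a.e. (Lebesgue differentiation).
-/

open Filter Topology

section IntervalIntegral

variable {E F G : Type*} [NormedAddCommGroup E] [NormedSpace ℝ E]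
  [NormedAddCommGroup F] [NormedSpace ℝ F] [NormedAddCommGroup G] [NormedSpace ℝ G]

theorem intervalIntegral_bilin_triangle_swap [CompleteSpace E] [CompleteSpace F]
    [CompleteSpace G] (B : E →L[ℝ] F →L[ℝ] G) {f : ℝ → E} {g : ℝ → F}
    {a b : ℝ} (hab : a ≤ b) (hf : IntegrableOn f (Ioc a b)) (hg : IntegrableOn g (Ioc a b)) :
    ∫ σ in a..b, B (f σ) (∫ τ in σ..b, g τ) = ∫ τ in a..b, B (∫ σ in a..τ, f σ) (g τ) := by
  set μ := volume.restrict (Ioc a b)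
  set H : ℝ × ℝ → G := {p | p.1 < p.2}.indicator fun p => B (f p.1) (g p.2)
  have hH : Integrable H (μ.prod μ) :=
    (hf.op_fst_snd (by fun_prop) ⟨‖B‖, B.le_opNorm₂⟩ hg).indicator
      (measurableSet_lt measurable_fst measurable_snd)
  have inner_left : ∀ σ ∈ Ioc a b, ∫ τ, H (σ, τ) ∂μ = B (f σ) (∫ τ in σ..b, g τ) := by
    intro σ hσ
    have hHσ : (fun τ => H (σ, τ)) = (Ioi σ).indicator fun τ => B (f σ) (g τ) := by
      ext τ
      simp [H, indicator_apply]
    rw [hHσ, integral_indicator measurableSet_Ioi, Measure.restrict_restrict measurableSet_Ioi,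
      inter_comm, Ioc_inter_Ioi, max_eq_right hσ.1.le,
      ContinuousLinearMap.integral_comp_comm _ (hg.mono_set (Ioc_subset_Ioc_left hσ.1.le)),
      intervalIntegral.integral_of_le hσ.2]
  have inner_right : ∀ τ ∈ Ioc a b, ∫ σ, H (σ, τ) ∂μ = B (∫ σ in a..τ, f σ) (g τ) := by
    intro τ hτ
    have hHτ : (fun σ => H (σ, τ)) = (Iio τ).indicator fun σ => B.flip (g τ) (f σ) := by
      ext σ
      simp [H, indicator_apply]
    rw [hHτ, integral_indicator measurableSet_Iio, Measure.restrict_restrict measurableSet_Iio,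
      show Iio τ ∩ Ioc a b = Ioo a τ by ext; simp; grind, ← integral_Ioc_eq_integral_Ioo,
      ContinuousLinearMap.integral_comp_comm _ (hf.mono_set (Ioc_subset_Ioc_right hτ.2)),
      intervalIntegral.integral_of_le hτ.1.le, ContinuousLinearMap.flip_apply]
  rw [intervalIntegral.integral_of_le hab, intervalIntegral.integral_of_le hab,
    ← setIntegral_congr_fun measurableSet_Ioc inner_left,
    ← setIntegral_congr_fun measurableSet_Ioc inner_right]
  exact integral_integral_swap hH

theorem integrableOn_bilin_primitive (B : E →L[ℝ] F →L[ℝ] G) {f : ℝ → E} {g : ℝ → F}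
    {a b : ℝ} (hf : IntegrableOn f (Icc a b)) (hg : IntegrableOn g (Icc a b)) :
    IntegrableOn (fun τ => B (∫ σ in a..τ, f σ) (g τ)) (Icc a b) := by
  rcases lt_or_ge b a with hba | hab
  · simp [Icc_eq_empty_of_lt hba]
  rw [← uIcc_of_le hab] at hf hg ⊢
  have hcont := intervalIntegral.continuousOn_primitive_interval hf
  obtain ⟨C, hC⟩ := isCompact_uIcc.exists_bound_of_continuousOn hcont
  exact B.integrable_of_bilin_of_bdd_left C (hcont.aestronglyMeasurable measurableSet_uIcc)
    ((ae_restrict_iff' measurableSet_uIcc).2 (.of_forall hC)) hg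

theorem ae_eq_of_forall_intervalIntegral_eq [CompleteSpace E] {f g : ℝ → E} {a b : ℝ}
    (hf : IntegrableOn f (Icc a b)) (hg : IntegrableOn g (Icc a b))
    (h : ∀ x ∈ Icc a b, ∫ t in a..x, f t = ∫ t in a..x, g t) :
    ∀ᵐ x, x ∈ Icc a b → f x = g x := by
  rcases lt_or_ge b a with hba | hab
  · simp [Icc_eq_empty_of_lt hba]
  rw [← uIcc_of_le hab] at hf hg
  filter_upwards [hf.intervalIntegrable.ae_hasDerivAt_integral,
    hg.intervalIntegrable.ae_hasDerivAt_integral, (Ioo_ae_eq_Icc (a := a) (b := b)).mem_iff]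
    with x hfx hgx hIoo hx
  have hx' : x ∈ uIcc a b := by rwa [uIcc_of_le hab]
  have heq : (fun y => ∫ t in a..y, f t) =ᶠ[𝓝 x] fun y => ∫ t in a..y, g t :=
    eventually_of_mem (Icc_mem_nhds (hIoo.2 hx).1 (hIoo.2 hx).2) h
  exact ((hfx hx' a left_mem_uIcc).congr_of_eventuallyEq heq.symm).unique
    (hgx hx' a left_mem_uIcc)

end IntervalIntegral

def crossBilin : E3 →L[ℝ] E3 →L[ℝ] E3 :=
  LinearMap.toContinuousLinearMap
    { toFun := crossCLM
      map_add' := fun a b => by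
        ext v i
        fin_cases i <;> simp [crossCLM, crossLM, cross] <;> ring
      map_smul' := fun c a => by
        ext v i
        fin_cases i <;> simp [crossCLM, crossLM, cross] <;> ring }

@[simp]
theorem crossBilin_apply (u v : E3) : crossBilin u v = cross u v := rfl

theorem integral_cross_sub_eq_integral_primitive_cross {γ γd ω : ℝ → E3} {s : ℝ} (hs : 0 ≤ s)
    (hγ : ∀ σ ∈ Icc 0 s, γ σ = γ 0 + ∫ τ in (0:ℝ)..σ, γd τ)
    (hγd : IntegrableOn γd (Icc 0 s)) (hω : IntegrableOn ω (Icc 0 s)) :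
    ∫ σ in (0:ℝ)..s, cross (ω σ) (γ s - γ σ)
      = ∫ τ in (0:ℝ)..s, cross (∫ σ in (0:ℝ)..τ, ω σ) (γd τ) := by
  have hγd' : ∀ σ ∈ Icc 0 s, IntervalIntegrable γd volume 0 σ := fun σ hσ =>
    (intervalIntegrable_iff_integrableOn_Icc_of_le hσ.1).2
      (hγd.mono_set (Icc_subset_Icc_right hσ.2))
  have hsub : ∀ σ ∈ uIcc 0 s, cross (ω σ) (γ s - γ σ) = crossBilin (ω σ) (∫ τ in σ..s, γd τ) := by
    intro σ hσ
    rw [uIcc_of_le hs] at hσ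
    rw [crossBilin_apply, hγ s (right_mem_Icc.2 hs), hγ σ hσ, add_sub_add_left_eq_sub,
      intervalIntegral.integral_interval_sub_left (hγd' s (right_mem_Icc.2 hs)) (hγd' σ hσ)]
  rw [intervalIntegral.integral_congr hsub,
    intervalIntegral_bilin_triangle_swap crossBilin hs (hω.mono_set Ioc_subset_Icc_self)
      (hγd.mono_set Ioc_subset_Icc_self)]
  simp only [crossBilin_apply]

theorem stem_growth_velocity_representation_iff_general
    (T : ℝ) (γ γd : ℝ → E3)
    (hγac : ∀ s ∈ Icc (0:ℝ) T, γ s = γ 0 + ∫ σ in (0:ℝ)..s, γd σ)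
    (hγd : MemLp γd 2 (volume.restrict (Icc (0:ℝ) T)))
    (ω : ℝ → E3) (hω : MemLp ω 2 (volume.restrict (Icc (0:ℝ) T)))
    (v vd : ℝ → E3)
    (hvac : ∀ s ∈ Icc (0:ℝ) T, v s = v 0 + ∫ σ in (0:ℝ)..s, vd σ)
    (hvd : IntegrableOn vd (Icc (0:ℝ) T))
    (hv0 : v 0 = 0) :
    (∀ s ∈ Icc (0:ℝ) T, v s = ∫ σ in (0:ℝ)..s, cross (ω σ) (γ s - γ σ)) ↔
      (∀ᵐ s : ℝ, s ∈ Icc (0:ℝ) T →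
        vd s = cross (∫ σ in (0:ℝ)..s, ω σ) (γd s)) := by
  have hγd₁ : IntegrableOn γd (Icc 0 T) := hγd.integrable one_le_two
  have hω₁ : IntegrableOn ω (Icc 0 T) := hω.integrable one_le_two
  have hv : ∀ s ∈ Icc (0:ℝ) T, v s = ∫ σ in (0:ℝ)..s, vd σ := fun s hs => by
    rw [hvac s hs, hv0, zero_add]
  have hrot : ∀ s ∈ Icc (0:ℝ) T, ∫ σ in (0:ℝ)..s, cross (ω σ) (γ s - γ σ)
      = ∫ τ in (0:ℝ)..s, cross (∫ σ in (0:ℝ)..τ, ω σ) (γd τ) := fun s hs =>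
    integral_cross_sub_eq_integral_primitive_cross hs.1
      (fun σ hσ => hγac σ (Icc_subset_Icc_right hs.2 hσ))
      (hγd₁.mono_set (Icc_subset_Icc_right hs.2)) (hω₁.mono_set (Icc_subset_Icc_right hs.2))
  constructor
  · intro H
    exact ae_eq_of_forall_intervalIntegral_eq hvd
      (integrableOn_bilin_primitive crossBilin hω₁ hγd₁) fun s hs => by
        rw [← hv s hs, H s hs, hrot s hs]
  · intro H s hs
    rw [hv s hs, hrot s hs]
    refine intervalIntegral.integral_congr_ae ?_
    filter_upwards [H] with σ hσ hσs
    rw [uIoc_of_le hs.1] at hσs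
    exact hσ ⟨hσs.1.le, hσs.2.trans hs.2⟩

/-- a map `v` with `v(0)=0` equals `s ↦ ∫₀^s ω(σ) × (γ(s) − γ(σ)) dσ` on `[0,T]`
if and only if its derivative satisfies `v'(s) = (∫₀^s ω) × γ'(s)` for a.e. `s ∈ [0,T]`. -/
theorem stem_growth_velocity_representation_iff
    (T : ℝ) (hT : 0 < T) (γ γd : ℝ → E3)
    (hγac : ∀ s ∈ Icc (0:ℝ) T, γ s = γ 0 + ∫ σ in (0:ℝ)..s, γd σ)
    (hγd : MemLp γd 2 (volume.restrict (Icc (0:ℝ) T)))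
    (ω : ℝ → E3) (hω : MemLp ω 2 (volume.restrict (Icc (0:ℝ) T)))
    (v vd : ℝ → E3)
    (hvac : ∀ s ∈ Icc (0:ℝ) T, v s = v 0 + ∫ σ in (0:ℝ)..s, vd σ)
    (hvd : IntegrableOn vd (Icc (0:ℝ) T))
    (hv0 : v 0 = 0) :
    (∀ s ∈ Icc (0:ℝ) T, v s = ∫ σ in (0:ℝ)..s, cross (ω σ) (γ s - γ σ)) ↔
      (∀ᵐ s : ℝ, s ∈ Icc (0:ℝ) T →
        vd s = cross (∫ σ in (0:ℝ)..s, ω σ) (γd s)) :=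
  stem_growth_velocity_representation_iff_general T γ γd hγac hγd ω hω v vd hvac hvd hv0
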